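/- Let f = f₁⊘f₀ be a nonconstant tropical meromorphic function with reduced representation f = [f₀:f₁] and limsup_{r→∞} (log T_f(r))/r = 0. Then for every a ∈ ℝ such that f⊕a ≢ a (i.e. f(x) > a for some x ∈ ℝ), the defect δ_f(a) = 1 − limsup_{r→∞} N(r, 1₀⊘(P_a∘f))/T_f(r) equals 0, where P_a(x₀,x₁) = max(a+x₀, x₁), so that (P_a∘f)(x) = max(a+f₀(x), f₁(x)). -/

import Mathlib

open Filter MeasureTheory Topology
open scoped Classical

noncomputable section

namespace TropNev

/-- `f` is tropical meromorphic: continuous and piecewise linear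
(affine on a small interval on each side of every point). -/
def IsTropMero (f : ℝ → ℝ) : Prop :=
  Continuous f ∧ ∀ x : ℝ, ∃ ε > (0:ℝ), ∃ sR sL : ℝ,
    (∀ t ∈ Set.Icc x (x + ε), f t = f x + sR * (t - x)) ∧
    (∀ t ∈ Set.Icc (x - ε) x, f t = f x + sL * (t - x))

/-- ω_f(x): right derivative minus left derivative. -/
def omega (f : ℝ → ℝ) (x : ℝ) : ℝ :=
  derivWithin f (Set.Ici x) x - derivWithin f (Set.Iic x) x

/-- tropical entire: tropical meromorphic with no poles. -/
def IsTropEntire (f : ℝ → ℝ) : Prop :=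
  IsTropMero f ∧ ∀ x : ℝ, 0 ≤ omega f x

/-- tropical proximity function m(r,f). -/
def prox (f : ℝ → ℝ) (r : ℝ) : ℝ := (max (f r) 0 + max (f (-r)) 0) / 2

/-- tropical counting function of poles N(r,f). -/
def countN (f : ℝ → ℝ) (r : ℝ) : ℝ :=
  (1 / 2) * ∑' b : ℝ, if |b| < r ∧ omega f b < 0 then -omega f b * (r - |b|) else 0

/-- N(r, 1₀ ⊘ g): counting function of the roots of g. -/
def countNroots (g : ℝ → ℝ) (r : ℝ) : ℝ := countN (fun x => -g x) r

/-- tropical Nevanlinna characteristic T(r,f). -/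
def charT (f : ℝ → ℝ) (r : ℝ) : ℝ := prox f r + countN f r

/-- limsup_{r→∞} h(r) = 0 (in the real-analysis sense). -/
def LimsupZero (h : ℝ → ℝ) : Prop :=
  (∀ ε : ℝ, 0 < ε → ∀ᶠ r : ℝ in atTop, h r < ε) ∧
  (∀ ε : ℝ, 0 < ε → ∃ᶠ r : ℝ in atTop, -ε < h r)

/-- liminf_{r→∞} h(r) = 0 (in the real-analysis sense). -/
def LiminfZero (h : ℝ → ℝ) : Prop :=
  (∀ ε : ℝ, 0 < ε → ∃ᶠ r : ℝ in atTop, h r < ε) ∧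
  (∀ ε : ℝ, 0 < ε → ∀ᶠ r : ℝ in atTop, -ε < h r)

/-- E ⊆ [1,∞) has zero upper density. -/
def ZeroUpperDensity (E : Set ℝ) : Prop :=
  LimsupZero fun r => (volume (E ∩ Set.Icc 1 r)).toReal / r

/-- E ⊆ [1,∞) has zero lower density. -/
def ZeroLowerDensity (E : Set ℝ) : Prop :=
  LiminfZero fun r => (volume (E ∩ Set.Icc 1 r)).toReal / r

/-- max of finitely many reals. -/
def tmax {m : ℕ} (F : Fin (m + 1) → ℝ) : ℝ :=
  Finset.univ.sup' Finset.univ_nonempty F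

/-- tropical holomorphic curve with reduced representation f₀,…,f_n :
all components tropical entire, with no common roots. -/
def IsTropCurve {n : ℕ} (f : Fin (n + 1) → ℝ → ℝ) : Prop :=
  (∀ k, IsTropEntire (f k)) ∧ ∀ x : ℝ, ∃ k, ¬ 0 < omega (f k) x

/-- tropical Cartan characteristic T_f(r). -/
def curveT {n : ℕ} (f : Fin (n + 1) → ℝ → ℝ) (r : ℝ) : ℝ :=
  (tmax (fun k => f k r) + tmax (fun k => f k (-r))) / 2 - tmax fun k => f k 0

/-- homogeneous tropical polynomial of degree d in the variables x₀,…,x_n,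
with coefficients in ℝ ∪ {−∞} indexed by the degree-d monomials
(i.e. multisets of size d over the variables), not all −∞. -/
structure TropPoly (n d : ℕ) where
  coeff : Sym (Fin (n + 1)) d → EReal
  nontriv : ∃ s, coeff s ≠ ⊥

/-- value of the monomial term c_I + i₀x₀+⋯+i_nx_n. -/
def TropPoly.term {n d : ℕ} (P : TropPoly n d) (s : Sym (Fin (n + 1)) d)
    (x : Fin (n + 1) → ℝ) : EReal :=
  P.coeff s + (((Multiset.map x (s : Multiset (Fin (n + 1)))).sum : ℝ) : EReal)

def TropPoly.evalE {n d : ℕ} (P : TropPoly n d) (x : Fin (n + 1) → ℝ) : EReal :=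
  Finset.univ.sup fun s => P.term s x

/-- the tropical hypersurface V_P : points where the maximum is attained
by at least two monomials. -/
def TropPoly.hyp {n d : ℕ} (P : TropPoly n d) : Set (Fin (n + 1) → ℝ) :=
  {x | ∃ s t : Sym (Fin (n + 1)) d, s ≠ t ∧
        P.term s x = P.evalE x ∧ P.term t x = P.evalE x}

/-- the composition P ∘ f. -/
def TropPoly.compo {n d : ℕ} (P : TropPoly n d) (f : Fin (n + 1) → ℝ → ℝ) : ℝ → ℝ :=
  fun t => (P.evalE fun k => f k t).toReal

/-- ‖a‖ = max_I c_I for the coefficient vector of P. -/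
def TropPoly.coeffNorm {n d : ℕ} (P : TropPoly n d) : ℝ :=
  (Finset.univ.sup fun s => P.coeff s).toReal

/-- tropical Weil function λ_{V_P}(f(x)) = d‖f(x)‖ + d‖a‖ − (P∘f)(x). -/
def weil {n d : ℕ} (P : TropPoly n d) (f : Fin (n + 1) → ℝ → ℝ) (x : ℝ) : ℝ :=
  d * tmax (fun k => f k x) + d * P.coeffNorm - P.compo f x

/-- proximity function m_f(r, V_P). -/
def proxCurve {n d : ℕ} (f : Fin (n + 1) → ℝ → ℝ) (P : TropPoly n d) (r : ℝ) : ℝ :=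
  (weil P f r + weil P f (-r)) / 2

/-- f is tropical algebraically nondegenerate. -/
def AlgNondeg {n : ℕ} (f : Fin (n + 1) → ℝ → ℝ) : Prop :=
  ∀ d : ℕ, 1 ≤ d → ∀ P : TropPoly n d, ∃ t : ℝ, (fun k => f k t) ∉ P.hyp

/-- f is tropical linearly nondegenerate. -/
def LinNondeg {n : ℕ} (f : Fin (n + 1) → ℝ → ℝ) : Prop :=
  ∀ P : TropPoly n 1, ∃ t : ℝ, (fun k => f k t) ∉ P.hyp

/-- Gondran–Minoux linear independence of a finite family of real functions. -/
def GMLinIndep {ι : Type*} [Fintype ι] [DecidableEq ι] (g : ι → ℝ → ℝ) : Prop :=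
  ¬ ∃ (I J : Finset ι) (a : ι → EReal),
      I.Nonempty ∧ J.Nonempty ∧ Disjoint I J ∧ I ∪ J = Finset.univ ∧
      (∃ i, a i ≠ ⊥) ∧
      ∀ x : ℝ, (I.sup fun i => a i + ((g i x : ℝ) : EReal)) =
        (J.sup fun j => a j + ((g j x : ℝ) : EReal))

/-- the degree-d tropical monomials f^I in f₀,…,f_n. -/
def monos {n : ℕ} (f : Fin (n + 1) → ℝ → ℝ) (d : ℕ) :
    Sym (Fin (n + 1)) d → ℝ → ℝ :=
  fun s x => (Multiset.map (fun k => f k x) (s : Multiset (Fin (n + 1)))).sum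

/-- Gondran–Minoux algebraic independence. -/
def GMAlgIndep {n : ℕ} (f : Fin (n + 1) → ℝ → ℝ) : Prop :=
  ∀ d : ℕ, 1 ≤ d → GMLinIndep (monos f d)

/-- F is a complete tropical linear combination of the family h :
every tropical-linear representation of F over h has all coefficients finite. -/
def TropComplete {ι : Type*} [Fintype ι] (h : ι → ℝ → ℝ) (F : ℝ → ℝ) : Prop :=
  ∀ a : ι → EReal,
    (∀ x : ℝ, ((F x : ℝ) : EReal) = Finset.univ.sup fun k => a k + ((h k x : ℝ) : EReal)) →
    ∀ k, a k ≠ ⊥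

/-- the tropical Casoratian with shift c. -/
def casorati {m : ℕ} (c : ℝ) (g : Fin (m + 1) → ℝ → ℝ) : ℝ → ℝ := fun x =>
  Finset.univ.sup' Finset.univ_nonempty
    fun π : Equiv.Perm (Fin (m + 1)) => ∑ j, g j (x + ((π j : ℕ) : ℝ) * c)

/-- tropical Cartan characteristic for a reduced representation [f₀:f₁] in TP¹. -/
def charT2 (f0 f1 : ℝ → ℝ) (r : ℝ) : ℝ :=
  (max (f0 r) (f1 r) + max (f0 (-r)) (f1 (-r))) / 2 - max (f0 0) (f1 0)

/-- reduced representation in TP¹: f₀, f₁ tropical entire with no common roots. -/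
def ReducedPair (f0 f1 : ℝ → ℝ) : Prop :=
  IsTropEntire f0 ∧ IsTropEntire f1 ∧ ∀ x : ℝ, ¬ (0 < omega f0 x ∧ 0 < omega f1 x)

/-- (P∘f)(x) = max(a₀+f₀(x), a₁+f₁(x)) for a TP¹ value [a₁:a₀]. -/
def pcomp (a0 a1 : EReal) (f0 f1 : ℝ → ℝ) : ℝ → ℝ := fun x =>
  ((a0 + ((f0 x : ℝ) : EReal)) ⊔ (a1 + ((f1 x : ℝ) : EReal))).toReal

/-- defect of a tropical holomorphic curve with respect to a tropical hypersurface. -/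
def curveDefect {n d : ℕ} (f : Fin (n + 1) → ℝ → ℝ) (P : TropPoly n d) : ℝ :=
  1 - Filter.limsup (fun r => countNroots (P.compo f) r / (d * curveT f r)) atTop

end TropNev

end

/-!
Jensen's formula holds for tropical entire functions: for convex piecewise linear `g`,
summing the slope jumps `ω_g(b) ≥ 0` over the finitely many kinks `b ∈ (-r, r)` gives
`N(r, 1₀ ⊘ g) = (g r + g (-r)) / 2 - g 0`. For `M = max f₀ f₁` this reads `T_f(r) = N(r, 1₀ ⊘ M)`;
since `P_a ∘ f = max (a + f₀) f₁` differs from `M` by at most `|a|`, it also yields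
`|N(r, 1₀ ⊘ (P_a ∘ f)) - T_f(r)| ≤ 2|a|`. As `f` is nonconstant, `M` is not affine (an entire
function below an affine one is affine with the same slope), so `M` has a kink and `T_f(r)` grows
at least linearly. Hence `N(r, 1₀ ⊘ (P_a ∘ f)) / T_f(r) → 1`.
-/

namespace TropNev

open Set

lemma eventually_nhdsGE_iff_Icc {x : ℝ} {P : ℝ → Prop} :
    (∀ᶠ s in 𝓝[≥] x, P s) ↔ ∃ ε > 0, ∀ s ∈ Icc x (x + ε), P s := by
  refine mem_nhdsGE_iff_exists_Icc_subset.trans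
    ⟨fun ⟨u, hxu, hu⟩ => ⟨u - x, by linarith, fun s hs => hu (by simpa using hs)⟩,
      fun ⟨ε, hε, hP⟩ => ⟨x + ε, by linarith, hP⟩⟩

lemma eventually_nhdsLE_iff_Icc {x : ℝ} {P : ℝ → Prop} :
    (∀ᶠ s in 𝓝[≤] x, P s) ↔ ∃ ε > 0, ∀ s ∈ Icc (x - ε) x, P s := by
  refine mem_nhdsLE_iff_exists_Icc_subset.trans
    ⟨fun ⟨l, hlx, hl⟩ => ⟨x - l, by linarith, fun s hs => hl (by simpa using hs)⟩,
      fun ⟨ε, hε, hP⟩ => ⟨x - ε, by linarith, hP⟩⟩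

lemma nonpos_of_forall_mul_le {a C : ℝ} (h : ∀ t ≥ 0, a * t ≤ C) : a ≤ 0 := by
  by_contra! ha
  have := h ((|C| + 1) / a) (by positivity)
  rw [mul_div_cancel₀ _ ha.ne'] at this
  linarith [le_abs_self C]

lemma tendsto_div_nhds_one_of_abs_sub_le {α : Type*} {l : Filter α} {N T : α → ℝ} {C : ℝ}
    (hT : Tendsto T l atTop) (hNT : ∀ᶠ r in l, |N r - T r| ≤ C) :
    Tendsto (fun r => N r / T r) l (𝓝 1) := by
  have hequiv : Asymptotics.IsEquivalent l N T := by
    refine (Asymptotics.IsBigO.of_bound C ?_).trans_isLittleO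
      ((Asymptotics.isLittleO_one_left_iff ℝ).2 (tendsto_norm_atTop_atTop.comp hT))
    filter_upwards [hNT] with r hr
    simpa using hr
  exact (Asymptotics.isEquivalent_iff_tendsto_one (hT.eventually_ne_atTop 0)).1 hequiv

noncomputable def rslope (h : ℝ → ℝ) (x : ℝ) : ℝ := derivWithin h (Ici x) x

noncomputable def lslope (h : ℝ → ℝ) (x : ℝ) : ℝ := derivWithin h (Iic x) x

lemma omega_eq_rslope_sub_lslope (h : ℝ → ℝ) (x : ℝ) :
    omega h x = rslope h x - lslope h x := rfl

lemma omega_neg (h : ℝ → ℝ) (x : ℝ) : omega (fun y => -h y) x = -omega h x := by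
  simp only [omega, derivWithin.fun_neg]
  ring

lemma omega_const_add (h : ℝ → ℝ) (a x : ℝ) : omega (fun y => a + h y) x = omega h x := by
  simp only [omega, derivWithin_const_add]

section Slopes

variable {h : ℝ → ℝ} {x p : ℝ}

lemma hasDerivWithinAt_of_eventually_affine {t : Set ℝ}
    (hev : ∀ᶠ s in 𝓝[t] x, h s = h x + p * (s - x)) : HasDerivWithinAt h p t x := by
  have hlin : HasDerivWithinAt (fun s => h x + p * (s - x)) p t x := by
    simpa using (((hasDerivWithinAt_id x t).sub_const x).const_mul p).const_add (h x)
  exact hlin.congr_of_eventuallyEq hev (by simp)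

lemma rslope_eq_of_eventually (hev : ∀ᶠ s in 𝓝[≥] x, h s = h x + p * (s - x)) :
    rslope h x = p :=
  (hasDerivWithinAt_of_eventually_affine hev).derivWithin (uniqueDiffWithinAt_Ici x)

lemma lslope_eq_of_eventually (hev : ∀ᶠ s in 𝓝[≤] x, h s = h x + p * (s - x)) :
    lslope h x = p :=
  (hasDerivWithinAt_of_eventually_affine hev).derivWithin (uniqueDiffWithinAt_Iic x)

lemma hasDerivAt_of_eventually_affine {c x₀ : ℝ} (hev : ∀ᶠ s in 𝓝 x, h s = c + p * (s - x₀)) :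
    HasDerivAt h p x := by
  have hlin : HasDerivAt (fun s => c + p * (s - x₀)) p x := by
    simpa using (((hasDerivAt_id x).sub_const x₀).const_mul p).const_add c
  exact hlin.congr_of_eventuallyEq hev

lemma rslope_eq_of_hasDerivAt (hd : HasDerivAt h p x) : rslope h x = p :=
  hd.hasDerivWithinAt.derivWithin (uniqueDiffWithinAt_Ici x)

lemma lslope_eq_of_hasDerivAt (hd : HasDerivAt h p x) : lslope h x = p :=
  hd.hasDerivWithinAt.derivWithin (uniqueDiffWithinAt_Iic x)

lemma omega_eq_zero_of_hasDerivAt (hd : HasDerivAt h p x) : omega h x = 0 := by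
  rw [omega_eq_rslope_sub_lslope, rslope_eq_of_hasDerivAt hd, lslope_eq_of_hasDerivAt hd,
    sub_self]

end Slopes

namespace IsTropMero

variable {h : ℝ → ℝ}

lemma of_eventually (hc : Continuous h)
    (hgerm : ∀ x, ∃ p q : ℝ, (∀ᶠ s in 𝓝[≥] x, h s = h x + p * (s - x)) ∧
      (∀ᶠ s in 𝓝[≤] x, h s = h x + q * (s - x))) : IsTropMero h := by
  refine ⟨hc, fun x => ?_⟩
  obtain ⟨p, q, hp, hq⟩ := hgerm x
  obtain ⟨ε₁, hε₁, h₁⟩ := eventually_nhdsGE_iff_Icc.1 hp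
  obtain ⟨ε₂, hε₂, h₂⟩ := eventually_nhdsLE_iff_Icc.1 hq
  refine ⟨min ε₁ ε₂, lt_min hε₁ hε₂, p, q, fun s hs => h₁ s ⟨hs.1, ?_⟩,
    fun s hs => h₂ s ⟨?_, hs.2⟩⟩
  · linarith [hs.2, min_le_left ε₁ ε₂]
  · linarith [hs.1, min_le_right ε₁ ε₂]

lemma eventually_nhdsGE (hm : IsTropMero h) (x : ℝ) :
    ∀ᶠ s in 𝓝[≥] x, h s = h x + rslope h x * (s - x) := by
  obtain ⟨ε, hε, p, -, hp, -⟩ := hm.2 x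
  have hev : ∀ᶠ s in 𝓝[≥] x, h s = h x + p * (s - x) :=
    eventually_nhdsGE_iff_Icc.2 ⟨ε, hε, hp⟩
  rwa [rslope_eq_of_eventually hev]

lemma eventually_nhdsLE (hm : IsTropMero h) (x : ℝ) :
    ∀ᶠ s in 𝓝[≤] x, h s = h x + lslope h x * (s - x) := by
  obtain ⟨ε, hε, -, q, -, hq⟩ := hm.2 x
  have hev : ∀ᶠ s in 𝓝[≤] x, h s = h x + q * (s - x) :=
    eventually_nhdsLE_iff_Icc.2 ⟨ε, hε, hq⟩
  rwa [lslope_eq_of_eventually hev]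

lemma eventually_nhds_of_omega_eq_zero (hm : IsTropMero h) {x : ℝ} (hx : omega h x = 0) :
    ∀ᶠ s in 𝓝 x, h s = h x + rslope h x * (s - x) := by
  have hsl : lslope h x = rslope h x := by
    rw [omega_eq_rslope_sub_lslope] at hx
    linarith
  rw [← nhdsLE_sup_nhdsGE, eventually_sup]
  exact ⟨hsl ▸ hm.eventually_nhdsLE x, hm.eventually_nhdsGE x⟩

lemma eventually_hasDerivAt_nhdsGT (hm : IsTropMero h) (x : ℝ) :
    ∀ᶠ t in 𝓝[>] x, HasDerivAt h (rslope h x) t := by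
  obtain ⟨ε, hε, hR⟩ := eventually_nhdsGE_iff_Icc.1 (hm.eventually_nhdsGE x)
  filter_upwards [Ioo_mem_nhdsGT (by linarith : x < x + ε)] with t ht
  exact hasDerivAt_of_eventually_affine
    (mem_of_superset (Ioo_mem_nhds ht.1 ht.2) fun s hs => hR s (Ioo_subset_Icc_self hs))

lemma eventually_hasDerivAt_nhdsLT (hm : IsTropMero h) (x : ℝ) :
    ∀ᶠ t in 𝓝[<] x, HasDerivAt h (lslope h x) t := by
  obtain ⟨ε, hε, hL⟩ := eventually_nhdsLE_iff_Icc.1 (hm.eventually_nhdsLE x)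
  filter_upwards [Ioo_mem_nhdsLT (by linarith : x - ε < x)] with t ht
  exact hasDerivAt_of_eventually_affine
    (mem_of_superset (Ioo_mem_nhds ht.1 ht.2) fun s hs => hL s (Ioo_subset_Icc_self hs))

lemma eventually_omega_eq_zero (hm : IsTropMero h) (x : ℝ) :
    ∀ᶠ t in 𝓝[≠] x, omega h t = 0 := by
  rw [← nhdsLT_sup_nhdsGT, eventually_sup]
  exact ⟨(hm.eventually_hasDerivAt_nhdsLT x).mono fun _ => omega_eq_zero_of_hasDerivAt,
    (hm.eventually_hasDerivAt_nhdsGT x).mono fun _ => omega_eq_zero_of_hasDerivAt⟩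

lemma finite_kinks (hm : IsTropMero h) {K : Set ℝ} (hK : IsCompact K) :
    {t ∈ K | omega h t ≠ 0}.Finite :=
  hK.finite_sdiff_of_mem_codiscreteWithin (s := {t | omega h t = 0}) <|
    mem_codiscreteWithin_iff_forall_mem_nhdsNE.2 fun x _ =>
      mem_of_superset (hm.eventually_omega_eq_zero x) subset_union_left

lemma exists_finset_kinks (hm : IsTropMero h) (u v : ℝ) :
    ∃ K : Finset ℝ, ∀ b, b ∈ K ↔ b ∈ Ioo u v ∧ omega h b ≠ 0 := by
  have hfin : {b | b ∈ Ioo u v ∧ omega h b ≠ 0}.Finite :=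
    (hm.finite_kinks isCompact_Icc).subset fun b hb => ⟨Ioo_subset_Icc_self hb.1, hb.2⟩
  exact ⟨hfin.toFinset, fun b => hfin.mem_toFinset⟩

lemma rslope_eq_of_omega_eq_zero (hm : IsTropMero h) {u v : ℝ} (huv : u < v)
    (hω : ∀ b ∈ Ioo u v, omega h b = 0) : ∀ t ∈ Ico u v, rslope h t = rslope h u := by
  -- `rslope h` is locally constant on `(u, v)`, and equals `rslope h u` just to the right of `u`
  have hzero : ∀ t ∈ Ioo u v, HasDerivAt (rslope h) 0 t := fun t ht =>
    (hasDerivAt_const t (rslope h t)).congr_of_eventuallyEq <|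
      (hm.eventually_nhds_of_omega_eq_zero (hω t ht)).eventually_nhds.mono fun _ hs =>
        rslope_eq_of_hasDerivAt (hasDerivAt_of_eventually_affine hs)
  obtain ⟨t', ht'd, ht'⟩ := ((hm.eventually_hasDerivAt_nhdsGT u).and (Ioo_mem_nhdsGT huv)).exists
  rintro t ⟨hut, htv⟩
  rcases hut.eq_or_lt with rfl | hut
  · rfl
  · rw [← rslope_eq_of_hasDerivAt ht'd]
    exact isOpen_Ioo.is_const_of_deriv_eq_zero isPreconnected_Ioo
      (fun s hs => (hzero s hs).differentiableAt.differentiableWithinAt)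
      (fun s hs => (hzero s hs).deriv) ⟨hut, htv⟩ ht'

lemma affine_of_omega_eq_zero (hm : IsTropMero h) {u v : ℝ} (huv : u < v)
    (hω : ∀ b ∈ Ioo u v, omega h b = 0) :
    (∀ t ∈ Icc u v, h t = h u + rslope h u * (t - u)) ∧ lslope h v = rslope h u := by
  have hright := hm.rslope_eq_of_omega_eq_zero huv hω
  refine ⟨fun t ht => ?_, ?_⟩
  · have hderiv : ∀ x ∈ Ico u v,
        HasDerivWithinAt (fun s => h s - rslope h u * s) 0 (Ici x) x := fun x hx => by
      simpa [hright x hx] using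
        (hasDerivWithinAt_of_eventually_affine (hm.eventually_nhdsGE x)).fun_sub
          ((hasDerivWithinAt_id x (Ici x)).const_mul (rslope h u))
    have hc : Continuous h := hm.1
    have := constant_of_has_deriv_right_zero (by fun_prop) hderiv t ht
    linarith
  · obtain ⟨t', ht'd, ht'⟩ :=
      ((hm.eventually_hasDerivAt_nhdsLT v).and (Ioo_mem_nhdsLT huv)).exists
    rw [← rslope_eq_of_hasDerivAt ht'd]
    exact hright t' (Ioo_subset_Ico_self ht')

lemma eq_affine_of_omega_eq_zero (hm : IsTropMero h) (hω : ∀ b, omega h b = 0) (x : ℝ) :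
    h x = h 0 + rslope h 0 * x := by
  rcases lt_trichotomy 0 x with hx | rfl | hx
  · have := (hm.affine_of_omega_eq_zero hx fun b _ => hω b).1 x (right_mem_Icc.2 hx.le)
    linarith
  · simp
  · obtain ⟨haff, hsl⟩ := hm.affine_of_omega_eq_zero hx fun b _ => hω b
    have h0 := haff 0 (right_mem_Icc.2 hx.le)
    have hsl0 : lslope h 0 = rslope h 0 := by
      linarith [hω 0, omega_eq_rslope_sub_lslope h 0]
    rw [← hsl, hsl0] at h0
    linarith

/-- Both identities are proved together: removing the leftmost kink `b` of `K`, `h` is affine on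
`[u, b]` and its slope jumps by `omega h b` at `b`. -/
lemma kink_expansion (hm : IsTropMero h) (K : Finset ℝ) {u v : ℝ} (huv : u < v)
    (hK : ∀ b, b ∈ K ↔ b ∈ Ioo u v ∧ omega h b ≠ 0) :
    lslope h v = rslope h u + ∑ b ∈ K, omega h b ∧
      h v - h u = rslope h u * (v - u) + ∑ b ∈ K, omega h b * (v - b) := by
  induction K using Finset.strongInduction generalizing u with
  | H K ih =>
    rcases K.eq_empty_or_nonempty with rfl | hne
    · obtain ⟨haff, hsl⟩ := hm.affine_of_omega_eq_zero huv fun b hb =>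
        not_not.1 fun hω => by simpa using (hK b).2 ⟨hb, hω⟩
      have hv := haff v (right_mem_Icc.2 huv.le)
      exact ⟨by simpa using hsl, by simp only [Finset.sum_empty, add_zero]; linarith⟩
    set b := K.min' hne
    have hbK : b ∈ K := K.min'_mem hne
    obtain ⟨⟨hub, hbv⟩, -⟩ := (hK b).1 hbK
    obtain ⟨haff, hsl⟩ := hm.affine_of_omega_eq_zero hub fun c hc => not_not.1 fun hω =>
      (K.min'_le c ((hK c).2 ⟨⟨hc.1, hc.2.trans hbv⟩, hω⟩)).not_gt hc.2
    have hK' : ∀ c, c ∈ K.erase b ↔ c ∈ Ioo b v ∧ omega h c ≠ 0 := by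
      intro c
      rw [Finset.mem_erase, hK c]
      constructor
      · rintro ⟨hcb, hc, hω⟩
        exact ⟨⟨lt_of_le_of_ne (K.min'_le c ((hK c).2 ⟨hc, hω⟩)) (Ne.symm hcb), hc.2⟩, hω⟩
      · rintro ⟨hc, hω⟩
        exact ⟨hc.1.ne', ⟨hub.trans hc.1, hc.2⟩, hω⟩
    obtain ⟨ih₁, ih₂⟩ := ih _ (K.erase_ssubset hbK) hbv hK'
    have hb := haff b (right_mem_Icc.2 hub.le)
    have hωb := omega_eq_rslope_sub_lslope h b
    rw [← Finset.add_sum_erase K _ hbK, ← Finset.add_sum_erase K _ hbK]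
    constructor
    · linarith
    · linear_combination ih₂ + hb - (v - b) * hωb + (v - b) * hsl

lemma sub_eq_lslope_mul_sub_sum (hm : IsTropMero h) {K : Finset ℝ} {u v : ℝ} (huv : u < v)
    (hK : ∀ b, b ∈ K ↔ b ∈ Ioo u v ∧ omega h b ≠ 0) :
    h v - h u = lslope h v * (v - u) - ∑ b ∈ K, omega h b * (b - u) := by
  obtain ⟨h₁, h₂⟩ := hm.kink_expansion K huv hK
  rw [h₂, h₁, add_mul, Finset.sum_mul, add_sub_assoc, ← Finset.sum_sub_distrib]
  congr 1
  exact Finset.sum_congr rfl fun b _ => by ring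

lemma jensen (hm : IsTropMero h) {r : ℝ} (hr : 0 < r) {K : Finset ℝ}
    (hK : ∀ b, b ∈ K ↔ b ∈ Ioo (-r) r ∧ omega h b ≠ 0) :
    h r + h (-r) - 2 * h 0 = ∑ b ∈ K, omega h b * (r - |b|) := by
  have hpos := (hm.kink_expansion (K.filter (0 < ·)) hr fun b => by
    rw [Finset.mem_filter, hK]
    exact ⟨fun ⟨⟨hb, hω⟩, hb0⟩ => ⟨⟨hb0, hb.2⟩, hω⟩,
      fun ⟨hb, hω⟩ => ⟨⟨⟨by linarith [hb.1], hb.2⟩, hω⟩, hb.1⟩⟩).2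
  have hneg := hm.sub_eq_lslope_mul_sub_sum (K := K.filter (· < 0)) (neg_lt_zero.2 hr)
    fun b => by
      rw [Finset.mem_filter, hK]
      exact ⟨fun ⟨⟨hb, hω⟩, hb0⟩ => ⟨⟨hb.1, hb0⟩, hω⟩,
        fun ⟨hb, hω⟩ => ⟨⟨⟨hb.1, by linarith [hb.2]⟩, hω⟩, hb.2⟩⟩
  have hzero : (if (0 : ℝ) ∈ K then omega h 0 * r else 0) = omega h 0 * r := by
    split_ifs with h0
    · rfl
    · rw [not_not.1 fun hω => h0 ((hK 0).2 ⟨⟨neg_lt_zero.2 hr, hr⟩, hω⟩), zero_mul]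
  have hsplit : ∑ b ∈ K, omega h b * (r - |b|) = ∑ b ∈ K with 0 < b, omega h b * (r - b) +
      ∑ b ∈ K with b < 0, omega h b * (b - -r) + omega h 0 * r := by
    rw [Finset.sum_filter, Finset.sum_filter, ← hzero,
      ← Finset.sum_ite_eq' K 0 (fun b => omega h b * r), ← Finset.sum_add_distrib,
      ← Finset.sum_add_distrib]
    refine Finset.sum_congr rfl fun b _ => ?_
    rcases lt_trichotomy b 0 with hb | rfl | hb
    · rw [if_neg hb.not_gt, if_pos hb, if_neg hb.ne, abs_of_neg hb]
      ring
    · simp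
    · rw [if_pos hb, if_neg hb.not_gt, if_neg hb.ne', abs_of_pos hb]
      ring
  rw [hsplit]
  linear_combination hpos - hneg - r * omega_eq_rslope_sub_lslope h 0

lemma omega_le_of_le_of_eq {M : ℝ → ℝ} (hm : IsTropMero h) (hM : IsTropMero M)
    (hle : ∀ s, h s ≤ M s) {x : ℝ} (hx : h x = M x) : omega h x ≤ omega M x := by
  have hr : rslope h x ≤ rslope M x := by
    obtain ⟨s, ⟨hs₁, hs₂⟩, hs⟩ :=
      ((((hm.eventually_nhdsGE x).and (hM.eventually_nhdsGE x)).filter_mono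
        (nhdsWithin_mono x Ioi_subset_Ici_self)).and self_mem_nhdsWithin).exists
    exact le_of_mul_le_mul_right (by linarith [hle s]) (sub_pos.2 (mem_Ioi.1 hs))
  have hl : lslope M x ≤ lslope h x := by
    obtain ⟨s, ⟨hs₁, hs₂⟩, hs⟩ :=
      ((((hm.eventually_nhdsLE x).and (hM.eventually_nhdsLE x)).filter_mono
        (nhdsWithin_mono x Iio_subset_Iic_self)).and self_mem_nhdsWithin).exists
    exact le_of_mul_le_mul_right (by linarith [hle s]) (sub_pos.2 (mem_Iio.1 hs))
  rw [omega_eq_rslope_sub_lslope, omega_eq_rslope_sub_lslope]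
  linarith

end IsTropMero

lemma isTropMero_max {h₀ h₁ : ℝ → ℝ} (hm₀ : IsTropMero h₀) (hm₁ : IsTropMero h₁) :
    IsTropMero fun s => max (h₀ s) (h₁ s) := by
  refine .of_eventually (hm₀.1.max hm₁.1) fun x => ?_
  rcases lt_trichotomy (h₀ x) (h₁ x) with hlt | heq | hgt
  · have hmax : ∀ᶠ s in 𝓝 x, max (h₀ s) (h₁ s) = h₁ s :=
      (hm₀.1.continuousAt.eventually_lt hm₁.1.continuousAt hlt).mono fun _ hs =>
        max_eq_right hs.le
    refine ⟨rslope h₁ x, lslope h₁ x, ?_, ?_⟩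
    · filter_upwards [nhdsWithin_le_nhds hmax, hm₁.eventually_nhdsGE x] with s hs h₁s
      rw [hs, h₁s, max_eq_right hlt.le]
    · filter_upwards [nhdsWithin_le_nhds hmax, hm₁.eventually_nhdsLE x] with s hs h₁s
      rw [hs, h₁s, max_eq_right hlt.le]
  · refine ⟨max (rslope h₀ x) (rslope h₁ x), min (lslope h₀ x) (lslope h₁ x), ?_, ?_⟩
    · filter_upwards [hm₀.eventually_nhdsGE x, hm₁.eventually_nhdsGE x, self_mem_nhdsWithin]
        with s h₀s h₁s (hs : x ≤ s)
      rw [h₀s, h₁s, heq, max_self, max_add_add_left, max_mul_of_nonneg _ _ (sub_nonneg.2 hs)]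
    · filter_upwards [hm₀.eventually_nhdsLE x, hm₁.eventually_nhdsLE x, self_mem_nhdsWithin]
        with s h₀s h₁s (hs : s ≤ x)
      rw [h₀s, h₁s, heq, max_self, max_add_add_left]
      rcases le_total (lslope h₀ x) (lslope h₁ x) with hq | hq
      · rw [min_eq_left hq, max_eq_left (mul_le_mul_of_nonpos_right hq (sub_nonpos.2 hs))]
      · rw [min_eq_right hq, max_eq_right (mul_le_mul_of_nonpos_right hq (sub_nonpos.2 hs))]
  · have hmax : ∀ᶠ s in 𝓝 x, max (h₀ s) (h₁ s) = h₀ s :=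
      (hm₁.1.continuousAt.eventually_lt hm₀.1.continuousAt hgt).mono fun _ hs =>
        max_eq_left hs.le
    refine ⟨rslope h₀ x, lslope h₀ x, ?_, ?_⟩
    · filter_upwards [nhdsWithin_le_nhds hmax, hm₀.eventually_nhdsGE x] with s hs h₀s
      rw [hs, h₀s, max_eq_left hgt.le]
    · filter_upwards [nhdsWithin_le_nhds hmax, hm₀.eventually_nhdsLE x] with s hs h₀s
      rw [hs, h₀s, max_eq_left hgt.le]

namespace IsTropEntire

variable {h : ℝ → ℝ}

lemma isTropMero (he : IsTropEntire h) : IsTropMero h := he.1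

lemma omega_nonneg (he : IsTropEntire h) (x : ℝ) : 0 ≤ omega h x := he.2 x

lemma const_add (he : IsTropEntire h) (a : ℝ) : IsTropEntire fun s => a + h s := by
  refine ⟨⟨continuous_const.add he.isTropMero.1, fun x => ?_⟩,
    fun x => (omega_const_add h a x).symm ▸ he.omega_nonneg x⟩
  obtain ⟨ε, hε, p, q, hp, hq⟩ := he.isTropMero.2 x
  exact ⟨ε, hε, p, q, fun t ht => by simp only [hp t ht]; ring,
    fun t ht => by simp only [hq t ht]; ring⟩

lemma add_rslope_mul_le (he : IsTropEntire h) {x v : ℝ} (hxv : x ≤ v) :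
    h x + rslope h x * (v - x) ≤ h v := by
  rcases hxv.eq_or_lt with rfl | hxv
  · simp
  obtain ⟨K, hK⟩ := he.isTropMero.exists_finset_kinks x v
  have hsum : 0 ≤ ∑ b ∈ K, omega h b * (v - b) := Finset.sum_nonneg fun b hb =>
    mul_nonneg (he.omega_nonneg b) (by linarith [((hK b).1 hb).1.2])
  linarith [(he.isTropMero.kink_expansion K hxv hK).2]

lemma add_lslope_mul_le (he : IsTropEntire h) {w x : ℝ} (hwx : w ≤ x) :
    h x + lslope h x * (w - x) ≤ h w := by
  rcases hwx.eq_or_lt with rfl | hwx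
  · simp
  obtain ⟨K, hK⟩ := he.isTropMero.exists_finset_kinks w x
  have hsum : 0 ≤ ∑ b ∈ K, omega h b * (b - w) := Finset.sum_nonneg fun b hb =>
    mul_nonneg (he.omega_nonneg b) (by linarith [((hK b).1 hb).1.1])
  linarith [he.isTropMero.sub_eq_lslope_mul_sub_sum hwx hK]

lemma eq_of_le_affine (he : IsTropEntire h) {A s : ℝ} (hle : ∀ x, h x ≤ A + s * x) (x : ℝ) :
    h x = h 0 + s * x := by
  have hr : ∀ x, rslope h x ≤ s := fun x => by
    have := nonpos_of_forall_mul_le (a := rslope h x - s) (C := A + s * x - h x) fun t ht => by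
      linarith [he.add_rslope_mul_le (le_add_of_nonneg_right ht : x ≤ x + t), hle (x + t)]
    linarith
  have hl : ∀ x, s ≤ lslope h x := fun x => by
    have := nonpos_of_forall_mul_le (a := s - lslope h x) (C := A + s * x - h x) fun t ht => by
      linarith [he.add_lslope_mul_le (sub_le_self x ht : x - t ≤ x), hle (x - t)]
    linarith
  have hω : ∀ b, omega h b = 0 := fun b => by
    linarith [he.omega_nonneg b, hr b, hl b, omega_eq_rslope_sub_lslope h b]
  have hs : rslope h 0 = s := by linarith [hω 0, hr 0, hl 0, omega_eq_rslope_sub_lslope h 0]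
  rw [he.isTropMero.eq_affine_of_omega_eq_zero hω x, hs]

lemma countNroots_eq_sum (he : IsTropEntire h) {r : ℝ} {K : Finset ℝ}
    (hK : ∀ b, b ∈ K ↔ b ∈ Ioo (-r) r ∧ omega h b ≠ 0) :
    countNroots h r = 1 / 2 * ∑ b ∈ K, omega h b * (r - |b|) := by
  unfold countNroots countN
  congr 1
  rw [tsum_eq_sum fun b hb => ?_]
  · refine Finset.sum_congr rfl fun b hb => ?_
    obtain ⟨hbr, hω⟩ := (hK b).1 hb
    rw [omega_neg, if_pos ⟨abs_lt.2 hbr, neg_neg_of_pos ((he.omega_nonneg b).lt_of_ne' hω)⟩,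
      neg_neg]
  · rw [if_neg]
    rintro ⟨hbr, hω⟩
    rw [omega_neg] at hω
    exact hb ((hK b).2 ⟨abs_lt.1 hbr, (neg_lt_zero.1 hω).ne'⟩)

lemma countNroots_eq (he : IsTropEntire h) {r : ℝ} (hr : 0 < r) :
    countNroots h r = (h r + h (-r)) / 2 - h 0 := by
  obtain ⟨K, hK⟩ := he.isTropMero.exists_finset_kinks (-r) r
  rw [he.countNroots_eq_sum hK, ← he.isTropMero.jensen hr hK]
  ring

lemma tendsto_countNroots_atTop (he : IsTropEntire h) {b : ℝ} (hb : omega h b ≠ 0) :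
    Tendsto (countNroots h) atTop atTop := by
  have hωb : 0 < omega h b := (he.omega_nonneg b).lt_of_ne' hb
  have hlin : Tendsto (fun r => omega h b / 2 * (r - |b|)) atTop atTop :=
    (tendsto_atTop_add_const_right atTop (-|b|) tendsto_id).const_mul_atTop (by positivity)
  refine tendsto_atTop_mono' atTop ?_ hlin
  filter_upwards [eventually_gt_atTop |b|] with r hr
  obtain ⟨K, hK⟩ := he.isTropMero.exists_finset_kinks (-r) r
  rw [he.countNroots_eq_sum hK]
  have hterm := Finset.single_le_sum (f := fun c => omega h c * (r - |c|))
    (fun c hc => mul_nonneg (he.omega_nonneg c) (by linarith [abs_lt.2 ((hK c).1 hc).1]))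
    ((hK b).2 ⟨abs_lt.1 hr, hb⟩)
  linarith

end IsTropEntire

lemma isTropEntire_max {h₀ h₁ : ℝ → ℝ} (he₀ : IsTropEntire h₀) (he₁ : IsTropEntire h₁) :
    IsTropEntire fun s => max (h₀ s) (h₁ s) := by
  have hm := isTropMero_max he₀.isTropMero he₁.isTropMero
  refine ⟨hm, fun x => ?_⟩
  rcases le_total (h₀ x) (h₁ x) with hx | hx
  · exact (he₁.omega_nonneg x).trans
      (he₁.isTropMero.omega_le_of_le_of_eq hm (fun _ => le_max_right _ _) (max_eq_right hx).symm)
  · exact (he₀.omega_nonneg x).trans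
      (he₀.isTropMero.omega_le_of_le_of_eq hm (fun _ => le_max_left _ _) (max_eq_left hx).symm)

lemma sub_eq_const_of_omega_max_eq_zero {f₀ f₁ : ℝ → ℝ} (he₀ : IsTropEntire f₀)
    (he₁ : IsTropEntire f₁) (hω : ∀ b, omega (fun s => max (f₀ s) (f₁ s)) b = 0) (x : ℝ) :
    f₁ x - f₀ x = f₁ 0 - f₀ 0 := by
  have hM := (isTropMero_max he₀.isTropMero he₁.isTropMero).eq_affine_of_omega_eq_zero hω
  have h₀ := he₀.eq_of_le_affine (fun s => (le_max_left _ _).trans (hM s).le) x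
  have h₁ := he₁.eq_of_le_affine (fun s => (le_max_right _ _).trans (hM s).le) x
  linarith

lemma abs_countNroots_sub_charT2_le {f₀ f₁ : ℝ → ℝ} (he₀ : IsTropEntire f₀)
    (he₁ : IsTropEntire f₁) (a : ℝ) {r : ℝ} (hr : 0 < r) :
    |countNroots (fun x => max (a + f₀ x) (f₁ x)) r - charT2 f₀ f₁ r| ≤ 2 * |a| := by
  have hclose : ∀ x, |max (a + f₀ x) (f₁ x) - max (f₀ x) (f₁ x)| ≤ |a| := fun x => by
    simpa using abs_max_sub_max_le_max (a + f₀ x) (f₁ x) (f₀ x) (f₁ x)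
  rw [(isTropEntire_max (he₀.const_add a) he₁).countNroots_eq hr, charT2]
  have h₁ := abs_le.1 (hclose r)
  have h₂ := abs_le.1 (hclose (-r))
  have h₃ := abs_le.1 (hclose 0)
  rw [abs_le]
  constructor <;> linarith

end TropNev

open TropNev Filter MeasureTheory Topology
theorem stmt17_general (f0 f1 : ℝ → ℝ) (hred : ReducedPair f0 f1)
    (f : ℝ → ℝ) (hfdef : f = fun x => f1 x - f0 x)
    (hnc : ¬ ∃ k : ℝ, ∀ x : ℝ, f x = k) :
    ∀ a : ℝ, (¬ ∀ x : ℝ, max (f x) a = a) →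
      1 - Filter.limsup
          (fun r => countNroots (fun x => max (a + f0 x) (f1 x)) r / charT2 f0 f1 r)
          Filter.atTop = 0 := by
  intro a _
  obtain ⟨he0, he1, -⟩ := hred
  have hM := isTropEntire_max he0 he1
  obtain ⟨b, hb⟩ : ∃ b, omega (fun x => max (f0 x) (f1 x)) b ≠ 0 := by
    by_contra! hω
    exact hnc ⟨f1 0 - f0 0, fun x => hfdef ▸ sub_eq_const_of_omega_max_eq_zero he0 he1 hω x⟩
  have hT : Tendsto (charT2 f0 f1) atTop atTop :=
    (hM.tendsto_countNroots_atTop hb).congr' <| (eventually_gt_atTop 0).mono fun r hr => by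
      rw [hM.countNroots_eq hr, charT2]
  have hN : ∀ᶠ r in atTop,
      |countNroots (fun x => max (a + f0 x) (f1 x)) r - charT2 f0 f1 r| ≤ 2 * |a| :=
    (eventually_gt_atTop 0).mono fun r hr => abs_countNroots_sub_charT2_le he0 he1 a hr
  rw [(tendsto_div_nhds_one_of_abs_sub_le hT hN).limsup_eq, sub_self]

/-- δ_f(a) = 0 for every finite a with f⊕a ≢ a. -/
theorem stmt17 (f0 f1 : ℝ → ℝ) (hred : ReducedPair f0 f1)
    (f : ℝ → ℝ) (hfdef : f = fun x => f1 x - f0 x)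
    (hnc : ¬ ∃ k : ℝ, ∀ x : ℝ, f x = k)
    (hgrow : LimsupZero fun r => Real.log (charT2 f0 f1 r) / r) :
    ∀ a : ℝ, (¬ ∀ x : ℝ, max (f x) a = a) →
      1 - Filter.limsup
          (fun r => countNroots (fun x => max (a + f0 x) (f1 x)) r / charT2 f0 f1 r)
          Filter.atTop = 0 :=
  stmt17_general f0 f1 hred f hfdef hnc
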